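/- arXiv:math-ph/0308037 — 3 statements merged into one kernel-verified Lean document; each statement's English description precedes it below -/
import Mathlib

section
/- Let ρ = exp(−H₀) and ρ_X = exp(−(H₀+X)) be finite faithful weights on a separable Hilbert space H, and suppose ρ_X is p-nearby ρ with constant C > 1 and p ∈ [0,1), i.e. C⁻¹ρ^{1+p} ≤ ρ_X ≤ Cρ^{1−p}. Then the form domain of X contains the form domain Q(H₀) = Dom(H₀^{1/2}), and as quadratic forms on Q(H₀) one has −log C − p·H₀ ≤ −X ≤ log C + p·H₀; in particular X is an H₀-bounded quadratic form with relative form bound at most p. -/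
open scoped InnerProductSpace ENNReal NNReal
open MeasureTheory Metric Filter

noncomputable section

variable {H : Type*} [NormedAddCommGroup H] [InnerProductSpace ℂ H] [CompleteSpace H]
  [TopologicalSpace.SeparableSpace H]

/-- The real power `ρ ^ t` (for `t ≥ 0`) of a positive operator `ρ`, via the continuous
functional calculus. -/
def opow (ρ : H →L[ℂ] H) (t : ℝ) : H →L[ℂ] H := cfc (fun x : ℝ => x ^ t) ρ

/-- The (real) trace of an operator, computed along the Hilbert basis `b`. -/
def trElem {ι : Type*} (b : HilbertBasis ι ℂ H) (T : H →L[ℂ] H) : ℝ :=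
  ∑' i, (⟪b i, T (b i)⟫_ℂ).re

/-- `ρ` is a finite faithful weight: a positive, injective, trace-class operator
(trace-class being witnessed by summability of the diagonal in the Hilbert basis `b`). -/
def IsFiniteWeight {ι : Type*} (b : HilbertBasis ι ℂ H) (ρ : H →L[ℂ] H) : Prop :=
  0 ≤ ρ ∧ Function.Injective (⇑ρ) ∧ Summable (fun i => (⟪b i, ρ (b i)⟫_ℂ).re)

/-- `σ` is nearby `ρ`: there is `C > 1` with `C⁻¹ ρ ≤ σ ≤ C ρ` in the Loewner order. -/
def IsNearby (σ ρ : H →L[ℂ] H) : Prop :=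
  ∃ C : ℝ, 1 < C ∧ C⁻¹ • ρ ≤ σ ∧ σ ≤ C • ρ

/-- `F` is the Araki family `t ↦ ρ^t X ρ^{-t}` of `X` relative to `ρ`: a bounded holomorphic
`B(H)`-valued extension to the disc `|t| < 1/2` of `t ↦ ρ^t X ρ^{-t}`, the latter being
expressed by `F t * ρ^t = ρ^t * X` and `ρ^t * F (-t) = X * ρ^t` for real `0 ≤ t < 1/2`. -/
def IsArakiFamily (ρ X : H →L[ℂ] H) (F : ℂ → H →L[ℂ] H) : Prop :=
  DifferentiableOn ℂ F (ball (0:ℂ) (1/2)) ∧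
  (∃ M : ℝ, ∀ t ∈ ball (0:ℂ) (1/2), ‖F t‖ ≤ M) ∧
  (∀ t : ℝ, 0 ≤ t → t < 1/2 → F (t:ℂ) * opow ρ t = opow ρ t * X) ∧
  (∀ t : ℝ, 0 ≤ t → t < 1/2 → opow ρ t * F (-(t:ℂ)) = X * opow ρ t)

/-- `X` satisfies the Araki condition for `ρ`. -/
def SatisfiesAraki (ρ X : H →L[ℂ] H) : Prop := ∃ F, IsArakiFamily ρ X F

/-- The Araki norm `‖X‖_A = sup_{|t| < 1/2} ‖ρ^t X ρ^{-t}‖`. -/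
def arakiNorm (ρ X : H →L[ℂ] H) : ℝ :=
  sInf {M : ℝ | 0 ≤ M ∧ ∃ F, IsArakiFamily ρ X F ∧ ∀ t ∈ ball (0:ℂ) (1/2), ‖F t‖ ≤ M}

/-- `σ = exp (-(H₀ + X))` where `ρ = exp (-H₀)`: the semigroup `t ↦ σ^t` is the mild
(Duhamel) solution of the semigroup `t ↦ ρ^t` perturbed by the bounded operator `-X`,
i.e. `σ^t = ρ^t - ∫_0^t ρ^{t-s} X σ^s ds` for all `t ≥ 0`. -/
def IsExpPerturbed (ρ σ X : H →L[ℂ] H) : Prop :=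
  ∀ t : ℝ, 0 ≤ t →
    opow σ t = opow ρ t - ∫ s in (0:ℝ)..t, opow ρ (t - s) * X * opow σ s

/-- The truncation `x ↦ -log (x + e^{-n})` of `-log`; it increases pointwise to `-log x`
as `n → ∞` and is operator anti-monotone. -/
def negLogTrunc (n : ℕ) (x : ℝ) : ℝ := - Real.log (x + Real.exp (-(n:ℝ)))

/-- The regularised quadratic form `⟪ξ, (-log (ρ + e^{-n})) ξ⟫` of `H₀ = -log ρ`. -/
def negLogFormSeq (ρ : H →L[ℂ] H) (ξ : H) (n : ℕ) : ℝ :=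
  (⟪ξ, (cfc (negLogTrunc n) ρ) ξ⟫_ℂ).re

/-- `ξ` lies in the form domain `Q(H₀) = Dom (H₀^{1/2})` of `H₀ = -log ρ`. -/
def InFormDomain (ρ : H →L[ℂ] H) (ξ : H) : Prop :=
  BddAbove (Set.range (negLogFormSeq ρ ξ))

/-- The value `⟪ξ, H₀ ξ⟫` of the quadratic form of `H₀ = -log ρ` (a monotone limit). -/
def negLogForm (ρ : H →L[ℂ] H) (ξ : H) : ℝ := ⨆ n, negLogFormSeq ρ ξ n

/-- The regularised quadratic form `⟪ξ, (σ + e^{-n})⁻¹ ξ⟫` of `σ⁻¹`. -/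
def invFormSeq (σ : H →L[ℂ] H) (ξ : H) (n : ℕ) : ℝ :=
  (⟪ξ, (cfc (fun x : ℝ => (x + Real.exp (-(n:ℝ)))⁻¹) σ) ξ⟫_ℂ).re

/-- The quadratic form `⟪ξ, σ⁻¹ ξ⟫ ∈ [0, ∞]` of the (possibly unbounded) inverse `σ⁻¹`
of the injective positive operator `σ`, as a monotone limit of regularisations. -/
def invForm (σ : H →L[ℂ] H) (ξ : H) : ℝ≥0∞ :=
  ⨆ n : ℕ, ENNReal.ofReal (invFormSeq σ ξ n)

/-- `S` is the relative entropy `S(ρ|σ) = Tr (ρ (log ρ - log σ))`, obtained as the limit of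
the regularised quantities `Tr (ρ (log (ρ + e^{-n}) - log (σ + e^{-n})))`. -/
def IsRelativeEntropy {ι : Type*} (b : HilbertBasis ι ℂ H) (ρ σ : H →L[ℂ] H) (S : ℝ) : Prop :=
  Tendsto (fun n : ℕ => trElem b (ρ * (cfc (negLogTrunc n) σ - cfc (negLogTrunc n) ρ)))
    atTop (nhds S)

/-- The `n`-th term of the Matsubara (Dyson/expansional) series: the integral over the
ordered simplex `0 ≤ s₁ ≤ ⋯ ≤ sₙ ≤ 1` (of volume `1/n!`) of the product
`F(s₁ - 1/2) ⋯ F(sₙ - 1/2)`, where `F t = ρ^t X ρ^{-t}`. -/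
def matsubaraTerm (F : ℂ → H →L[ℂ] H) (n : ℕ) : H →L[ℂ] H :=
  ∫ s in {s : Fin n → ℝ | (∀ i, s i ∈ Set.Icc (0:ℝ) 1) ∧ Monotone s},
    (List.ofFn fun i => F (((s i - 1/2 : ℝ) : ℂ))).prod


/-!
The nearby bounds `C⁻¹ ρ^{1+p} ≤ σ ≤ C ρ^{1-p}` are operator inequalities, and `log` is operator
monotone, so taking logarithms gives `(1-p) H₀ - log C ≤ -log σ ≤ (1+p) H₀ + log C` as forms.
Since `-log σ = H₀ + X`, this is `-log C - p H₀ ≤ -X ≤ log C + p H₀`. All logarithms are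
regularised by a shift `e^{-n}`; a given shift on one side is matched by a small enough shift
on the other side, uniformly on the compact spectrum of `ρ`.
-/

section ShiftEstimates

open Set

lemma exists_exp_neg_nat_le {c : ℝ} (hc : 0 < c) : ∃ m : ℕ, Real.exp (-(m : ℝ)) ≤ c := by
  obtain ⟨m, hm⟩ := exists_nat_gt (-Real.log c)
  have hexp := Real.exp_le_exp.mpr (by linarith : -(m : ℝ) ≤ Real.log c)
  exact ⟨m, by rwa [Real.exp_log hc] at hexp⟩

lemma exists_nat_apply_add_exp_neg_le {f : ℝ → ℝ} (hf : Continuous f) (M : ℝ) {η : ℝ}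
    (hη : 0 < η) : ∃ m : ℕ, ∀ x ∈ Icc 0 M, f (x + Real.exp (-(m : ℝ))) ≤ f x + η := by
  obtain ⟨δ, hδ, hfδ⟩ := Metric.uniformContinuousOn_iff.mp
    ((isCompact_Icc (a := 0) (b := M + 1)).uniformContinuousOn_of_continuous hf.continuousOn)
    η hη
  obtain ⟨m, hm⟩ := exists_exp_neg_nat_le (lt_min (half_pos hδ) one_pos)
  refine ⟨m, fun x ⟨hx0, hxM⟩ => ?_⟩
  have hpos := Real.exp_pos (-(m : ℝ))
  have hshift_lt := hm.trans (min_le_left _ _)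
  have hshift_le_one := hm.trans (min_le_right _ _)
  have hclose := hfδ (x + Real.exp (-(m : ℝ))) ⟨by linarith, by linarith⟩ x ⟨hx0, by linarith⟩
    (by rw [Real.dist_eq, add_sub_cancel_left, abs_of_pos hpos]; linarith)
  rw [Real.dist_eq] at hclose
  linarith [le_abs_self (f (x + Real.exp (-(m : ℝ))) - f x)]

lemma exists_nat_apply_add_exp_neg_le_apply_add {f : ℝ → ℝ} (hf : Continuous f)
    (hmono : StrictMonoOn f (Ici 0)) (M : ℝ) {δ : ℝ} (hδ : 0 < δ) :
    ∃ n : ℕ, ∀ x ∈ Icc 0 M, f x + Real.exp (-(n : ℝ)) ≤ f (x + δ) := by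
  obtain ⟨b, hb, hfb⟩ := (isCompact_Icc (a := 0) (b := M)).exists_forall_le'
    (f := fun x => f (x + δ) - f x) (by fun_prop)
    fun x hx => sub_pos.mpr (hmono hx.1 (by simp only [mem_Ici]; linarith [hx.1]) (by linarith))
  obtain ⟨n, hn⟩ := exists_exp_neg_nat_le hb
  exact ⟨n, fun x hx => by linarith [hfb x hx]⟩

end ShiftEstimates

lemma continuousOn_negLogTrunc (n : ℕ) : ContinuousOn (negLogTrunc n) (Set.Ici 0) := by
  intro x (hx : 0 ≤ x)
  have hpos : x + Real.exp (-(n : ℝ)) ≠ 0 := by positivity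
  exact ((Real.continuousAt_log hpos).comp (f := fun x => x + Real.exp (-(n : ℝ)))
    (by fun_prop)).neg.continuousWithinAt

lemma negLogTrunc_le_log_add_mul {C r x y : ℝ} (hC : 0 < C) (hx : 0 ≤ x) {m n : ℕ}
    (h : C⁻¹ * (x + Real.exp (-(m : ℝ))) ^ r ≤ y + Real.exp (-(n : ℝ))) :
    negLogTrunc n y ≤ Real.log C + r * negLogTrunc m x := by
  have hxm : 0 < x + Real.exp (-(m : ℝ)) := by positivity
  have hlog := Real.log_le_log (by positivity) h
  rw [Real.log_mul (by positivity) (by positivity), Real.log_inv, Real.log_rpow hxm] at hlog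
  simp only [negLogTrunc]
  linarith

lemma neg_log_add_mul_le_negLogTrunc {C r x y : ℝ} (hC : 0 < C) (hx : 0 ≤ x) {m n : ℕ}
    (hy : 0 < y + Real.exp (-(n : ℝ)))
    (h : y + Real.exp (-(n : ℝ)) ≤ C * (x + Real.exp (-(m : ℝ))) ^ r) :
    -Real.log C + r * negLogTrunc m x ≤ negLogTrunc n y := by
  have hxm : 0 < x + Real.exp (-(m : ℝ)) := by positivity
  have hlog := Real.log_le_log hy h
  rw [Real.log_mul hC.ne' (by positivity), Real.log_rpow hxm] at hlog
  simp only [negLogTrunc]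
  linarith

section CStarAlgebra

variable {A : Type*} [CStarAlgebra A] [PartialOrder A] [StarOrderedRing A]

lemma exists_spectrum_subset_Icc {a : A} (ha : 0 ≤ a) : ∃ M, spectrum ℝ a ⊆ Set.Icc 0 M := by
  obtain ⟨M, hM⟩ := (spectrum.isCompact (𝕜 := ℝ) a).bddAbove
  exact ⟨M, fun x hx => ⟨spectrum_nonneg_of_nonneg ha hx, hM hx⟩⟩

lemma cfc_negLogTrunc_eq_neg_log {a : A} (ha : 0 ≤ a) (n : ℕ) :
    cfc (negLogTrunc n) a = -CFC.log (a + algebraMap ℝ A (Real.exp (-(n : ℝ)))) := by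
  have hshift : ContinuousOn (fun x : ℝ => x + Real.exp (-(n : ℝ))) (spectrum ℝ a) := by fun_prop
  have hlog : ContinuousOn Real.log
      ((fun x : ℝ => x + Real.exp (-(n : ℝ))) '' spectrum ℝ a) := by
    rintro _ ⟨x, hx, rfl⟩
    have := spectrum_nonneg_of_nonneg ha hx
    exact (Real.continuousAt_log (by positivity)).continuousWithinAt
  rw [show negLogTrunc n = fun x => -Real.log (x + Real.exp (-(n : ℝ))) from rfl, cfc_neg,
    cfc_comp' Real.log _ a hlog hshift, cfc_add_const _ _ a, cfc_id' ℝ a, CFC.log]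

lemma cfc_negLogTrunc_antitone {a b : A} (ha : 0 ≤ a) (hab : a ≤ b) (n : ℕ) :
    cfc (negLogTrunc n) b ≤ cfc (negLogTrunc n) a := by
  have hpos : IsStrictlyPositive (a + algebraMap ℝ A (Real.exp (-(n : ℝ)))) :=
    (isStrictlyPositive_algebraMap (Real.exp_pos _)).nonneg_add ha
  rw [cfc_negLogTrunc_eq_neg_log ha, cfc_negLogTrunc_eq_neg_log (ha.trans hab)]
  exact neg_le_neg (CFC.log_le_log (add_le_add_left hab _) hpos)

lemma cfc_negLogTrunc_cfc {a : A} (ha : 0 ≤ a) {f : ℝ → ℝ} (hf : Continuous f)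
    (hf0 : ∀ x ∈ spectrum ℝ a, 0 ≤ f x) (n : ℕ) :
    cfc (negLogTrunc n) (cfc f a) = cfc (fun x => negLogTrunc n (f x)) a :=
  (cfc_comp' (negLogTrunc n) f a ((continuousOn_negLogTrunc n).mono
    (by rintro _ ⟨x, hx, rfl⟩; exact hf0 x hx)) hf.continuousOn).symm

lemma exists_cfc_negLogTrunc_le {ρ σ : A} (hρ : 0 ≤ ρ) {p C : ℝ} (hp : 0 ≤ p) (hC : 0 < C)
    (hlow : C⁻¹ • cfc (fun x : ℝ => x ^ (1 + p)) ρ ≤ σ) (n : ℕ) :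
    ∃ m : ℕ, cfc (negLogTrunc n) σ ≤ cfc (fun x => Real.log C + (1 + p) * negLogTrunc m x) ρ := by
  obtain ⟨M, hM⟩ := exists_spectrum_subset_Icc hρ
  have hpow : Continuous fun x : ℝ => x ^ (1 + p) := Real.continuous_rpow_const (by linarith)
  have hf0 : ∀ x ∈ spectrum ℝ ρ, 0 ≤ C⁻¹ * x ^ (1 + p) := fun x hx => by
    have := (hM hx).1
    positivity
  obtain ⟨m, hm⟩ := exists_nat_apply_add_exp_neg_le (continuous_const.mul hpow) M
    (Real.exp_pos (-(n : ℝ)))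
  rw [← cfc_const_mul _ _ ρ hpow.continuousOn] at hlow
  refine ⟨m, ?_⟩
  calc cfc (negLogTrunc n) σ
      ≤ cfc (negLogTrunc n) (cfc (fun x : ℝ => C⁻¹ * x ^ (1 + p)) ρ) :=
        cfc_negLogTrunc_antitone (cfc_nonneg hf0) hlow n
    _ = cfc (fun x => negLogTrunc n (C⁻¹ * x ^ (1 + p))) ρ :=
        cfc_negLogTrunc_cfc hρ (continuous_const.mul hpow) hf0 n
    _ ≤ cfc (fun x => Real.log C + (1 + p) * negLogTrunc m x) ρ :=
        cfc_mono (fun x hx => negLogTrunc_le_log_add_mul hC (hM hx).1 (hm x (hM hx)))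
          ((continuousOn_negLogTrunc n).comp (continuous_const.mul hpow).continuousOn hf0)
          (continuousOn_const.add (continuousOn_const.mul
            ((continuousOn_negLogTrunc m).mono fun x hx => (hM hx).1)))

lemma exists_le_cfc_negLogTrunc {ρ σ : A} (hρ : 0 ≤ ρ) (hσ : 0 ≤ σ) {p C : ℝ} (hp : p < 1)
    (hC : 0 < C) (hupp : σ ≤ C • cfc (fun x : ℝ => x ^ (1 - p)) ρ) (m : ℕ) :
    ∃ n : ℕ, cfc (fun x => -Real.log C + (1 - p) * negLogTrunc m x) ρ ≤ cfc (negLogTrunc n) σ := by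
  obtain ⟨M, hM⟩ := exists_spectrum_subset_Icc hρ
  have hpow : Continuous fun x : ℝ => x ^ (1 - p) := Real.continuous_rpow_const (by linarith)
  have hf0 : ∀ x ∈ spectrum ℝ ρ, 0 ≤ C * x ^ (1 - p) := fun x hx => by
    have := (hM hx).1
    positivity
  obtain ⟨n, hn⟩ := exists_nat_apply_add_exp_neg_le_apply_add (continuous_const.mul hpow)
    (fun x hx y hy hxy => mul_lt_mul_of_pos_left
      (Real.strictMonoOn_rpow_Ici_of_exponent_pos (by linarith) hx hy hxy) hC) M
    (Real.exp_pos (-(m : ℝ)))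
  rw [← cfc_const_mul _ _ ρ hpow.continuousOn] at hupp
  refine ⟨n, ?_⟩
  calc cfc (fun x => -Real.log C + (1 - p) * negLogTrunc m x) ρ
      ≤ cfc (fun x => negLogTrunc n (C * x ^ (1 - p))) ρ :=
        cfc_mono (fun x hx => neg_log_add_mul_le_negLogTrunc hC (hM hx).1
            (by have := hf0 x hx; positivity) (hn x (hM hx)))
          (continuousOn_const.add (continuousOn_const.mul
            ((continuousOn_negLogTrunc m).mono fun x hx => (hM hx).1)))
          ((continuousOn_negLogTrunc n).comp (continuous_const.mul hpow).continuousOn hf0)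
    _ = cfc (negLogTrunc n) (cfc (fun x : ℝ => C * x ^ (1 - p)) ρ) :=
        (cfc_negLogTrunc_cfc hρ (continuous_const.mul hpow) hf0 n).symm
    _ ≤ cfc (negLogTrunc n) σ := cfc_negLogTrunc_antitone hσ hupp n

end CStarAlgebra

section SupremumBounds

variable {ι κ : Type*} {u : ι → ℝ} {v : κ → ℝ} {a c : ℝ}

lemma bddAbove_and_ciSup_le_of_forall_exists_le [Nonempty ι] (hc : 0 ≤ c)
    (hv : BddAbove (Set.range v)) (h : ∀ i, ∃ k, u i ≤ a + c * v k) :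
    BddAbove (Set.range u) ∧ ⨆ i, u i ≤ a + c * ⨆ k, v k := by
  have hbound : ∀ i, u i ≤ a + c * ⨆ k, v k := fun i => by
    obtain ⟨k, hk⟩ := h i
    exact hk.trans (by gcongr; exact le_ciSup hv k)
  exact ⟨⟨_, Set.forall_mem_range.mpr hbound⟩, ciSup_le hbound⟩

lemma add_mul_ciSup_le_ciSup_of_forall_exists_le [Nonempty κ] (hc : 0 < c)
    (hu : BddAbove (Set.range u)) (h : ∀ k, ∃ i, a + c * v k ≤ u i) :
    a + c * ⨆ k, v k ≤ ⨆ i, u i := by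
  have hbound : ⨆ k, v k ≤ ((⨆ i, u i) - a) / c := ciSup_le fun k => by
    obtain ⟨i, hi⟩ := h k
    rw [le_div_iff₀ hc]
    linarith [le_ciSup hu i]
  rw [le_div_iff₀ hc] at hbound
  linarith

end SupremumBounds

section QuadraticForms

variable {E : Type*} [NormedAddCommGroup E] [InnerProductSpace ℂ E]

lemma re_inner_le_re_inner_of_le {S T : E →L[ℂ] E} (h : S ≤ T) (ξ : E) :
    (⟪ξ, S ξ⟫_ℂ).re ≤ (⟪ξ, T ξ⟫_ℂ).re := by
  have := ((ContinuousLinearMap.le_def S T).mp h).re_inner_nonneg_right ξ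
  rwa [sub_apply, inner_sub_right, map_sub, sub_nonneg] at this

variable [CompleteSpace E]

lemma re_inner_cfc_const_add_mul {T : E →L[ℂ] E} (hT : IsSelfAdjoint T) (a b : ℝ) {g : ℝ → ℝ}
    (hg : ContinuousOn g (spectrum ℝ T)) (ξ : E) :
    (⟪ξ, cfc (fun x => a + b * g x) T ξ⟫_ℂ).re = a * ‖ξ‖ ^ 2 + b * (⟪ξ, cfc g T ξ⟫_ℂ).re := by
  rw [cfc_const_add a (fun x => b * g x) T (continuousOn_const.mul hg) hT,
    cfc_const_mul b g T hg]
  simp [Algebra.algebraMap_eq_smul_one, inner_self_eq_norm_sq_to_K, ← Complex.ofReal_pow]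

variable {ρ σ : E →L[ℂ] E} {p C : ℝ}

lemma negLogForm_le_of_le (hρ : 0 ≤ ρ) (hp : 0 ≤ p) (hC : 0 < C)
    (hlow : C⁻¹ • opow ρ (1 + p) ≤ σ) {ξ : E} (hξ : InFormDomain ρ ξ) :
    InFormDomain σ ξ ∧ negLogForm σ ξ ≤ Real.log C * ‖ξ‖ ^ 2 + (1 + p) * negLogForm ρ ξ := by
  refine bddAbove_and_ciSup_le_of_forall_exists_le (by linarith) hξ fun n => ?_
  obtain ⟨m, hm⟩ := exists_cfc_negLogTrunc_le hρ hp hC hlow n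
  exact ⟨m, (re_inner_le_re_inner_of_le hm ξ).trans_eq (re_inner_cfc_const_add_mul
    (.of_nonneg hρ) _ _ ((continuousOn_negLogTrunc m).mono
      fun _ hx => spectrum_nonneg_of_nonneg hρ hx) ξ)⟩

lemma le_negLogForm_of_le (hρ : 0 ≤ ρ) (hσ : 0 ≤ σ) (hp : p < 1) (hC : 0 < C)
    (hupp : σ ≤ C • opow ρ (1 - p)) {ξ : E} (hξ : InFormDomain σ ξ) :
    -Real.log C * ‖ξ‖ ^ 2 + (1 - p) * negLogForm ρ ξ ≤ negLogForm σ ξ := by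
  refine add_mul_ciSup_le_ciSup_of_forall_exists_le (by linarith) hξ fun m => ?_
  obtain ⟨n, hn⟩ := exists_le_cfc_negLogTrunc hρ hσ hp hC hupp m
  exact ⟨n, (re_inner_cfc_const_add_mul (.of_nonneg hρ) _ _ ((continuousOn_negLogTrunc m).mono
      fun _ hx => spectrum_nonneg_of_nonneg hρ hx) ξ).symm.trans_le
    (re_inner_le_re_inner_of_le hn ξ)⟩

end QuadraticForms

/-- If `ρ = exp (-H₀)` and `σ = ρ_X = exp (-(H₀+X))` are finite faithful
weights, and `σ` is `p`-nearby `ρ` with constant `C > 1`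
(`C⁻¹ ρ^{1+p} ≤ σ ≤ C ρ^{1-p}`), then the form domain of the quadratic form `X`
(with form domain `Dq`, the form sum relation `-log σ = H₀ + X` being expressed by
`hdom` and `hsum`) contains `Q(H₀)`, and on `Q(H₀)` one has the form inequalities
`-log C - p H₀ ≤ -X ≤ log C + p H₀`; in particular `X` is an `H₀`-bounded form with
relative form bound at most `p`. -/
theorem statement0 {ι : Type*} (b : HilbertBasis ι ℂ H) (ρ σ : H →L[ℂ] H)
    (hρ : IsFiniteWeight b ρ) (hσ : IsFiniteWeight b σ)
    (p : ℝ) (hp0 : 0 ≤ p) (hp1 : p < 1) (C : ℝ) (hC : 1 < C)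
    (hlow : C⁻¹ • opow ρ (1 + p) ≤ σ) (hupp : σ ≤ C • opow ρ (1 - p))
    (q : H → ℝ) (Dq : Set H)
    (hdom : ∀ ξ : H, InFormDomain σ ξ ↔ (InFormDomain ρ ξ ∧ ξ ∈ Dq))
    (hsum : ∀ ξ : H, InFormDomain σ ξ → negLogForm σ ξ = negLogForm ρ ξ + q ξ) :
    (∀ ξ : H, InFormDomain ρ ξ → ξ ∈ Dq) ∧
    (∀ ξ : H, InFormDomain ρ ξ →
      - Real.log C * ‖ξ‖ ^ 2 - p * negLogForm ρ ξ ≤ -(q ξ) ∧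
      -(q ξ) ≤ Real.log C * ‖ξ‖ ^ 2 + p * negLogForm ρ ξ) ∧
    (∀ ξ : H, InFormDomain ρ ξ →
      |q ξ| ≤ Real.log C * ‖ξ‖ ^ 2 + p * negLogForm ρ ξ) := by
  have hC0 : 0 < C := by linarith
  have hbounds : ∀ ξ, InFormDomain ρ ξ → ξ ∈ Dq ∧
      (-Real.log C * ‖ξ‖ ^ 2 - p * negLogForm ρ ξ ≤ -(q ξ) ∧
        -(q ξ) ≤ Real.log C * ‖ξ‖ ^ 2 + p * negLogForm ρ ξ) := by
    intro ξ hξ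
    obtain ⟨hξσ, hupper⟩ := negLogForm_le_of_le hρ.1 hp0 hC0 hlow hξ
    have hlower := le_negLogForm_of_le hρ.1 hσ.1 hp1 hC0 hupp hξσ
    have hformSum := hsum ξ hξσ
    exact ⟨((hdom ξ).mp hξσ).2, by linarith, by linarith⟩
  refine ⟨fun ξ hξ => (hbounds ξ hξ).1, fun ξ hξ => (hbounds ξ hξ).2, fun ξ hξ => ?_⟩
  obtain ⟨-, hlower, hupper⟩ := hbounds ξ hξ
  exact abs_le.mpr ⟨by linarith, by linarith⟩
end
end

section
/- Let ρ be a density operator (positive trace-class with Tr ρ = 1) on a separable Hilbert space H that is injective, and let X be a bounded self-adjoint operator satisfying the Araki condition for ρ. Then the square of the Bogoliubov–Kubo–Mori norm of X is dominated by the square of the Araki norm: ‖X‖_M² = ∫₀¹ Tr(ρ^t X ρ^{1−t} X) dt ≤ ‖X‖_A², where ‖X‖_A = sup_{|t|<1/2} ‖ρ^t X ρ^{−t}‖. -/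
open scoped InnerProductSpace ENNReal NNReal
open MeasureTheory Metric Filter

noncomputable section

variable {H : Type*} [NormedAddCommGroup H] [InnerProductSpace ℂ H] [CompleteSpace H]
  [TopologicalSpace.SeparableSpace H]

/-! Writing `R = ρ^{1/2}`, the Araki condition gives `ρ^t X ρ^{1-t} = R F(t - 1/2) R` for
`0 < t < 1`, where `F` is a holomorphic extension of `s ↦ ρ^s X ρ^{-s}` bounded by `M`.
Expanding the trace in the Hilbert basis and applying Cauchy–Schwarz twice gives
`|Tr (R G R X)| ≤ ‖G‖ ‖R‖₂ ‖R X‖₂` for the Hilbert–Schmidt norm `‖·‖₂`, and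
`‖R X‖₂ = ‖X* R‖₂ ≤ ‖X‖ ‖R‖₂` with `‖R‖₂² = Tr ρ = 1`. Since also `‖X‖ = ‖F 0‖ ≤ M`,
the integrand is bounded by `M²`, and taking the infimum over admissible `M` gives the
Araki norm. -/

open ContinuousLinearMap

theorem Real.summable_mul_and_tsum_mul_le_sqrt {ι : Type*} {f g : ι → ℝ}
    (hf : ∀ i, 0 ≤ f i) (hg : ∀ i, 0 ≤ g i)
    (hf2 : Summable fun i => f i ^ 2) (hg2 : Summable fun i => g i ^ 2) :
    (Summable fun i => f i * g i) ∧
      ∑' i, f i * g i ≤ √(∑' i, f i ^ 2) * √(∑' i, g i ^ 2) := by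
  simp_rw [← Real.rpow_two] at hf2 hg2 ⊢
  simpa only [Real.sqrt_eq_rpow, one_div] using
    Real.summable_and_inner_le_Lp_mul_Lq_tsum_of_nonneg Real.HolderConjugate.two_two hf hg hf2 hg2

theorem summable_and_tsum_le_of_tsum_ofReal_le {ι : Type*} {f : ι → ℝ} (hf : ∀ i, 0 ≤ f i)
    {c : ℝ} (hc : 0 ≤ c) (h : ∑' i, ENNReal.ofReal (f i) ≤ ENNReal.ofReal c) :
    Summable f ∧ ∑' i, f i ≤ c := by
  have hsum : Summable f :=
    (ENNReal.summable_toReal (ne_top_of_le_ne_top ENNReal.ofReal_ne_top h)).congr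
      fun i => ENNReal.toReal_ofReal (hf i)
  refine ⟨hsum, ?_⟩
  rwa [← ENNReal.ofReal_tsum_of_nonneg hf hsum, ENNReal.ofReal_le_ofReal_iff hc] at h

section HilbertSchmidt

variable {𝕜 E ι : Type*} [RCLike 𝕜] [NormedAddCommGroup E] [InnerProductSpace 𝕜 E]
  (b : HilbertBasis ι 𝕜 E)

theorem HilbertBasis.hasSum_norm_inner_sq (x : E) :
    HasSum (fun i => ‖⟪b i, x⟫_𝕜‖ ^ 2) (‖x‖ ^ 2) := by
  simpa [b.repr_apply_apply, b.repr.norm_map] using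
    lp.hasSum_norm (p := 2) (by norm_num) (b.repr x)

theorem HilbertBasis.ofReal_norm_sq_eq_tsum (x : E) :
    ENNReal.ofReal (‖x‖ ^ 2) = ∑' i, ENNReal.ofReal (‖⟪b i, x⟫_𝕜‖ ^ 2) := by
  have hx := b.hasSum_norm_inner_sq x
  rw [← hx.tsum_eq, ENNReal.ofReal_tsum_of_nonneg (fun _ => by positivity) hx.summable]

variable [CompleteSpace E]

theorem IsSelfAdjoint.re_inner_mul_self_apply {R : E →L[𝕜] E} (hR : IsSelfAdjoint R) (x : E) :
    RCLike.re ⟪x, (R * R) x⟫_𝕜 = ‖R x‖ ^ 2 := by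
  rw [mul_apply_eq_comp, ← hR.isSymmetric.apply_clm, inner_self_eq_norm_sq]

theorem HilbertBasis.tsum_ofReal_norm_adjoint_apply_sq (A : E →L[𝕜] E) :
    ∑' i, ENNReal.ofReal (‖adjoint A (b i)‖ ^ 2) = ∑' i, ENNReal.ofReal (‖A (b i)‖ ^ 2) := by
  simp_rw [b.ofReal_norm_sq_eq_tsum, adjoint_inner_right, norm_inner_symm (A _)]
  exact ENNReal.tsum_comm

theorem HilbertBasis.summable_and_tsum_norm_mul_apply_sq_le {R : E →L[𝕜] E}
    (hR : IsSelfAdjoint R) (hRsum : Summable fun i => ‖R (b i)‖ ^ 2) (X : E →L[𝕜] E) :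
    (Summable fun i => ‖R (X (b i))‖ ^ 2) ∧
      ∑' i, ‖R (X (b i))‖ ^ 2 ≤ ‖X‖ ^ 2 * ∑' i, ‖R (b i)‖ ^ 2 := by
  refine summable_and_tsum_le_of_tsum_ofReal_le (fun _ => by positivity)
    (mul_nonneg (sq_nonneg _) (tsum_nonneg fun _ => sq_nonneg _)) ?_
  have hadj : adjoint (adjoint X * R) = R * X := by
    rw [← star_eq_adjoint, star_mul, hR.star_eq, star_eq_adjoint, adjoint_adjoint]
  calc ∑' i, ENNReal.ofReal (‖R (X (b i))‖ ^ 2)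
      = ∑' i, ENNReal.ofReal (‖(adjoint X) (R (b i))‖ ^ 2) := by
        simpa [hadj] using b.tsum_ofReal_norm_adjoint_apply_sq (adjoint X * R)
    _ ≤ ∑' i, ENNReal.ofReal (‖X‖ ^ 2 * ‖R (b i)‖ ^ 2) := by
        gcongr with i
        simpa [mul_pow] using pow_le_pow_left₀ (norm_nonneg _) ((adjoint X).le_opNorm _) 2
    _ = ENNReal.ofReal (‖X‖ ^ 2 * ∑' i, ‖R (b i)‖ ^ 2) := by
        rw [← tsum_mul_left,
          ENNReal.ofReal_tsum_of_nonneg (fun _ => by positivity) (hRsum.mul_left _)]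

end HilbertSchmidt

section Powers

variable {E : Type*} [NormedAddCommGroup E] [InnerProductSpace ℂ E] [CompleteSpace E]
  {ρ : E →L[ℂ] E}

theorem isSelfAdjoint_opow (ρ : E →L[ℂ] E) (t : ℝ) : IsSelfAdjoint (opow ρ t) :=
  cfc_predicate _ ρ

theorem opow_zero (hρ : 0 ≤ ρ) : opow ρ 0 = 1 := by
  rw [opow, cfc_congr (fun x _ => Real.rpow_zero x), cfc_const_one ℝ ρ hρ.isSelfAdjoint]

theorem opow_add (hρ : 0 ≤ ρ) {s t : ℝ} (hs : 0 ≤ s) (ht : 0 ≤ t) :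
    opow ρ (s + t) = opow ρ s * opow ρ t := by
  rw [opow, opow, opow, ← cfc_mul _ _ ρ (Real.continuous_rpow_const hs).continuousOn
    (Real.continuous_rpow_const ht).continuousOn]
  exact cfc_congr fun x hx => Real.rpow_add_of_nonneg (spectrum_nonneg_of_nonneg hρ hx) hs ht

theorem opow_half_mul_opow_half (hρ : 0 ≤ ρ) : opow ρ (1 / 2) * opow ρ (1 / 2) = ρ := by
  rw [← opow_add hρ (by norm_num) (by norm_num), add_halves, opow,
    cfc_congr (fun x _ => Real.rpow_one x), cfc_id' ℝ ρ hρ.isSelfAdjoint]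

end Powers

section Trace

variable {E ι : Type*} [NormedAddCommGroup E] [InnerProductSpace ℂ E] [CompleteSpace E]
  (b : HilbertBasis ι ℂ E)

theorem trElem_mul_self {R : E →L[ℂ] E} (hR : IsSelfAdjoint R) :
    trElem b (R * R) = ∑' i, ‖R (b i)‖ ^ 2 :=
  tsum_congr fun i => hR.re_inner_mul_self_apply (b i)

theorem abs_trElem_mul_mul_mul_le {R : E →L[ℂ] E} (hR : IsSelfAdjoint R)
    (hRsum : Summable fun i => ‖R (b i)‖ ^ 2) (G X : E →L[ℂ] E) :
    |trElem b (R * G * R * X)| ≤ ‖G‖ * ‖X‖ * ∑' i, ‖R (b i)‖ ^ 2 := by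
  obtain ⟨hXsum, hXle⟩ := b.summable_and_tsum_norm_mul_apply_sq_le hR hRsum X
  obtain ⟨hprod, hCS⟩ := Real.summable_mul_and_tsum_mul_le_sqrt
    (fun i => norm_nonneg (R (b i))) (fun i => norm_nonneg (R (X (b i)))) hRsum hXsum
  have hterm (i : ι) : ‖(⟪b i, (R * G * R * X) (b i)⟫_ℂ).re‖ ≤
      ‖G‖ * (‖R (b i)‖ * ‖R (X (b i))‖) :=
    calc ‖(⟪b i, (R * G * R * X) (b i)⟫_ℂ).re‖ ≤ ‖⟪R (b i), G (R (X (b i)))⟫_ℂ‖ := by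
          simp only [mul_apply_eq_comp, ← hR.isSymmetric.apply_clm]
          exact Complex.abs_re_le_norm _
      _ ≤ ‖R (b i)‖ * (‖G‖ * ‖R (X (b i))‖) :=
          (norm_inner_le_norm _ _).trans (by gcongr; exact G.le_opNorm _)
      _ = ‖G‖ * (‖R (b i)‖ * ‖R (X (b i))‖) := by ring
  have hsqrt : √(∑' i, ‖R (X (b i))‖ ^ 2) ≤ ‖X‖ * √(∑' i, ‖R (b i)‖ ^ 2) :=
    calc √(∑' i, ‖R (X (b i))‖ ^ 2) ≤ √(‖X‖ ^ 2 * ∑' i, ‖R (b i)‖ ^ 2) := Real.sqrt_le_sqrt hXle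
      _ = ‖X‖ * √(∑' i, ‖R (b i)‖ ^ 2) := by
          rw [Real.sqrt_mul (sq_nonneg _), Real.sqrt_sq (norm_nonneg _)]
  calc |trElem b (R * G * R * X)|
      ≤ ∑' i, ‖G‖ * (‖R (b i)‖ * ‖R (X (b i))‖) :=
        tsum_of_norm_bounded (hprod.mul_left _).hasSum hterm
    _ ≤ ‖G‖ * (√(∑' i, ‖R (b i)‖ ^ 2) * (‖X‖ * √(∑' i, ‖R (b i)‖ ^ 2))) := by
        rw [tsum_mul_left]
        gcongr
        exact hCS.trans (by gcongr)
    _ = ‖G‖ * ‖X‖ * ∑' i, ‖R (b i)‖ ^ 2 := by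
        rw [mul_left_comm _ ‖X‖, Real.mul_self_sqrt (tsum_nonneg fun _ => sq_nonneg _)]
        ring

end Trace

namespace IsArakiFamily

variable {E ι : Type*} [NormedAddCommGroup E] [InnerProductSpace ℂ E] [CompleteSpace E]
  {ρ X : E →L[ℂ] E} {F : ℂ → E →L[ℂ] E}

theorem apply_zero (hF : IsArakiFamily ρ X F) (hρ : 0 ≤ ρ) : F 0 = X := by
  simpa [opow_zero hρ] using hF.2.2.1 0 le_rfl (by norm_num)

theorem opow_mul_mul_opow_eq (hF : IsArakiFamily ρ X F) (hρ : 0 ≤ ρ) {t : ℝ}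
    (ht₀ : 0 < t) (ht₁ : t < 1) :
    opow ρ t * X * opow ρ (1 - t) = opow ρ (1 / 2) * F ↑(t - 1 / 2) * opow ρ (1 / 2) := by
  rcases le_or_gt (1 / 2) t with ht | ht
  · have hsplit : opow ρ t = opow ρ (1 / 2) * opow ρ (t - 1 / 2) := by
      rw [← opow_add hρ (by norm_num) (by linarith), add_sub_cancel]
    have hmerge : opow ρ (t - 1 / 2) * opow ρ (1 - t) = opow ρ (1 / 2) := by
      rw [← opow_add hρ (by linarith) (by linarith)]
      congr 1
      ring
    rw [hsplit, mul_assoc (opow ρ (1 / 2)), ← hF.2.2.1 _ (by linarith) (by linarith)]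
    simp only [mul_assoc, hmerge]
  · have hsplit : opow ρ (1 - t) = opow ρ (1 / 2 - t) * opow ρ (1 / 2) := by
      rw [← opow_add hρ (by linarith) (by norm_num)]
      congr 1
      ring
    have hmerge : opow ρ t * opow ρ (1 / 2 - t) = opow ρ (1 / 2) := by
      rw [← opow_add hρ ht₀.le (by linarith), add_sub_cancel]
    have hcast : ((t - 1 / 2 : ℝ) : ℂ) = -((1 / 2 - t : ℝ) : ℂ) := by
      push_cast
      ring
    rw [hsplit, ← mul_assoc, mul_assoc (opow ρ t), ← hF.2.2.2 _ (by linarith) (by linarith),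
      hcast, ← mul_assoc, hmerge]

theorem abs_trElem_le (b : HilbertBasis ι ℂ E) (hF : IsArakiFamily ρ X F) (hρ : 0 ≤ ρ)
    (hρtc : Summable fun i => (⟪b i, ρ (b i)⟫_ℂ).re) (hρtr : trElem b ρ = 1) {M : ℝ}
    (hM : ∀ z ∈ ball (0 : ℂ) (1 / 2), ‖F z‖ ≤ M) {t : ℝ} (ht₀ : 0 < t) (ht₁ : t < 1) :
    |trElem b (opow ρ t * X * opow ρ (1 - t) * X)| ≤ M ^ 2 := by
  have hR := isSelfAdjoint_opow ρ (1 / 2)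
  have hRR := opow_half_mul_opow_half hρ
  have hRsum : Summable fun i => ‖opow ρ (1 / 2) (b i)‖ ^ 2 :=
    hρtc.congr fun i => by
      have h := hR.re_inner_mul_self_apply (b i)
      rwa [hRR] at h
  have hRtr : ∑' i, ‖opow ρ (1 / 2) (b i)‖ ^ 2 = 1 := by rw [← trElem_mul_self b hR, hRR, hρtr]
  have hFt : ‖F ↑(t - 1 / 2)‖ ≤ M := hM _ <| by
    rw [mem_ball_zero_iff, Complex.norm_real, Real.norm_eq_abs, abs_lt]
    constructor <;> linarith
  have hX : ‖X‖ ≤ M := hF.apply_zero hρ ▸ hM 0 (mem_ball_self (by norm_num))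
  rw [hF.opow_mul_mul_opow_eq hρ ht₀ ht₁]
  refine (abs_trElem_mul_mul_mul_le b hR hRsum _ X).trans ?_
  rw [hRtr, mul_one, sq]
  exact mul_le_mul hFt hX (norm_nonneg _) ((norm_nonneg _).trans hFt)

theorem integral_trElem_le (b : HilbertBasis ι ℂ E) (hF : IsArakiFamily ρ X F) (hρ : 0 ≤ ρ)
    (hρtc : Summable fun i => (⟪b i, ρ (b i)⟫_ℂ).re) (hρtr : trElem b ρ = 1) {M : ℝ}
    (hM : ∀ z ∈ ball (0 : ℂ) (1 / 2), ‖F z‖ ≤ M) :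
    ∫ t in (0 : ℝ)..1, trElem b (opow ρ t * X * opow ρ (1 - t) * X) ≤ M ^ 2 := by
  refine (le_abs_self _).trans ?_
  simpa using intervalIntegral.norm_integral_le_of_norm_le_const_ae (a := 0) (b := 1)
    (f := fun t => trElem b (opow ρ t * X * opow ρ (1 - t) * X)) (C := M ^ 2) <| by
      filter_upwards [volume.ae_ne 1] with t ht₁ ht
      rw [Set.uIoc_of_le zero_le_one] at ht
      exact hF.abs_trElem_le b hρ hρtc hρtr hM ht.1 (ht.2.lt_of_ne ht₁)

end IsArakiFamily

theorem statement8_general {ι : Type*} (b : HilbertBasis ι ℂ H) (ρ X : H →L[ℂ] H)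
    (hρpos : 0 ≤ ρ)
    (hρtc : Summable (fun i => (⟪b i, ρ (b i)⟫_ℂ).re)) (hρtr : trElem b ρ = 1)
    (hA : SatisfiesAraki ρ X) :
    ∫ t in (0:ℝ)..1, trElem b (opow ρ t * X * opow ρ (1 - t) * X) ≤ (arakiNorm ρ X) ^ 2 := by
  obtain ⟨F₀, hF₀⟩ := hA
  obtain ⟨C, hC⟩ := hF₀.2.1
  have hne : {M : ℝ | 0 ≤ M ∧ ∃ F, IsArakiFamily ρ X F ∧
      ∀ t ∈ ball (0:ℂ) (1/2), ‖F t‖ ≤ M}.Nonempty :=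
    ⟨max C 0, le_max_right _ _, F₀, hF₀, fun t ht => (hC t ht).trans (le_max_left _ _)⟩
  have hsqrt : √(∫ t in (0:ℝ)..1, trElem b (opow ρ t * X * opow ρ (1 - t) * X)) ≤
      arakiNorm ρ X :=
    le_csInf hne fun M ⟨hM₀, F, hF, hFM⟩ =>
      (Real.sqrt_le_left hM₀).mpr (hF.integral_trElem_le b hρpos hρtc hρtr hFM)
  exact (Real.sqrt_le_iff.mp hsqrt).2

/-- For an injective density operator `ρ` (positive trace class with
`Tr ρ = 1`) and a bounded self-adjoint `X` satisfying the Araki condition for `ρ`, the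
square of the BKM norm is dominated by the square of the Araki norm:
`‖X‖_M² = ∫₀¹ Tr (ρ^t X ρ^{1-t} X) dt ≤ ‖X‖_A²`. -/
theorem statement8 {ι : Type*} (b : HilbertBasis ι ℂ H) (ρ X : H →L[ℂ] H)
    (hρpos : 0 ≤ ρ) (hρinj : Function.Injective (⇑ρ))
    (hρtc : Summable (fun i => (⟪b i, ρ (b i)⟫_ℂ).re)) (hρtr : trElem b ρ = 1)
    (hX : IsSelfAdjoint X) (hA : SatisfiesAraki ρ X) :
    ∫ t in (0:ℝ)..1, trElem b (opow ρ t * X * opow ρ (1 - t) * X) ≤ (arakiNorm ρ X) ^ 2 :=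
  statement8_general b ρ X hρpos hρtc hρtr hA
end
end

section
/- Let ρ be a finite faithful weight on a separable Hilbert space H, and let A_ρ be the space of bounded operators X satisfying the Araki condition for ρ, equipped with the Araki norm ‖X‖_A = sup_{|t|<1/2} ‖ρ^t X ρ^{−t}‖. Then A_ρ is complete: every sequence (X_n) in A_ρ that is Cauchy in ‖·‖_A converges in ‖·‖_A to some X ∈ A_ρ. (This follows because a sequence of B(H)-valued functions, each bounded and holomorphic on the open disc {|t| < 1/2} and Cauchy in the sup norm, converges uniformly to a bounded holomorphic function on the same disc.) -/
open scoped InnerProductSpace ENNReal NNReal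
open MeasureTheory Metric Filter

noncomputable section

variable {H : Type*} [NormedAddCommGroup H] [InnerProductSpace ℂ H] [CompleteSpace H]
  [TopologicalSpace.SeparableSpace H]

/-! ### Auxiliary lemmas for Statement 9 -/

section Aux

open scoped Topology

lemma opow_zero_eq_one (ρ : H →L[ℂ] H) (hsa : IsSelfAdjoint ρ) : opow ρ 0 = 1 := by
  unfold opow
  simp only [Real.rpow_zero]
  exact cfc_const_one ℝ ρ hsa

lemma opow_factor (ρ : H →L[ℂ] H) (hpos : 0 ≤ ρ) {t : ℝ} (ht : 0 < t) (ht1 : t < 1) :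
    opow ρ (1 - t) * opow ρ t = ρ := by
  have hsa : IsSelfAdjoint ρ := .of_nonneg hpos
  unfold opow
  rw [← cfc_mul (fun x : ℝ => x ^ (1 - t)) (fun x : ℝ => x ^ t) ρ
      ((Real.continuous_rpow_const (by linarith)).continuousOn)
      ((Real.continuous_rpow_const ht.le).continuousOn)]
  conv_rhs => rw [← cfc_id ℝ ρ hsa]
  apply cfc_congr
  intro x hx
  have hx0 : 0 ≤ x := spectrum_nonneg_of_nonneg hpos hx
  have h := Real.rpow_add' (y := 1 - t) (z := t) hx0 (by norm_num)
  rw [sub_add_cancel, Real.rpow_one] at h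
  simpa using h.symm

lemma opow_injective (ρ : H →L[ℂ] H) (hpos : 0 ≤ ρ) (hinj : Function.Injective ρ)
    {t : ℝ} (h0 : 0 ≤ t) (h1 : t < 1) : Function.Injective (opow ρ t) := by
  rcases eq_or_lt_of_le h0 with rfl | ht
  · rw [opow_zero_eq_one ρ (.of_nonneg hpos)]
    intro a b hab
    simpa using hab
  · intro a b hab
    apply hinj
    have hfac := opow_factor ρ hpos ht h1
    have h2 : ∀ x, ρ x = opow ρ (1 - t) (opow ρ t x) := by
      intro x
      rw [← ContinuousLinearMap.mul_apply, hfac]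
    rw [h2 a, h2 b, hab]

lemma arakiFamily_apply_zero {ρ X : H →L[ℂ] H} (hsa : IsSelfAdjoint ρ) {F : ℂ → H →L[ℂ] H}
    (hF : IsArakiFamily ρ X F) : F 0 = X := by
  have h := hF.2.2.1 0 le_rfl (by norm_num)
  simpa [opow_zero_eq_one ρ hsa] using h

lemma isArakiFamily_sub {ρ X X' : H →L[ℂ] H} {F F' : ℂ → H →L[ℂ] H}
    (h : IsArakiFamily ρ X F) (h' : IsArakiFamily ρ X' F') :
    IsArakiFamily ρ (X - X') (fun t => F t - F' t) := by
  obtain ⟨hd, ⟨M, hM⟩, hl, hr⟩ := h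
  obtain ⟨hd', ⟨M', hM'⟩, hl', hr'⟩ := h'
  refine ⟨hd.sub hd', ⟨M + M', fun t ht => ?_⟩, fun t h0 h1 => ?_, fun t h0 h1 => ?_⟩
  · exact (norm_sub_le _ _).trans (add_le_add (hM t ht) (hM' t ht))
  · rw [sub_mul, hl t h0 h1, hl' t h0 h1, mul_sub]
  · rw [mul_sub, hr t h0 h1, hr' t h0 h1, sub_mul]

lemma arakiFamily_unique {ρ X : H →L[ℂ] H} (hpos : 0 ≤ ρ) (hinj : Function.Injective ρ)
    {F G : ℂ → H →L[ℂ] H} (hF : IsArakiFamily ρ X F) (hG : IsArakiFamily ρ X G) :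
    Set.EqOn F G (ball (0:ℂ) (1/2)) := by
  have hFa : AnalyticOnNhd ℂ F (ball (0:ℂ) (1/2)) := hF.1.analyticOnNhd isOpen_ball
  have hGa : AnalyticOnNhd ℂ G (ball (0:ℂ) (1/2)) := hG.1.analyticOnNhd isOpen_ball
  apply hFa.eqOn_of_preconnected_of_frequently_eq hGa (convex_ball _ _).isPreconnected
    (mem_ball_self (by norm_num))
  -- the families agree at `-t` for real `0 < t < 1/2`, by injectivity of `ρ^t`
  have eqneg : ∀ t : ℝ, 0 < t → t < 1/2 → F (-(t:ℂ)) = G (-(t:ℂ)) := by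
    intro t h0 h1
    have h := (hF.2.2.2 t h0.le h1).trans (hG.2.2.2 t h0.le h1).symm
    ext ξ
    exact opow_injective ρ hpos hinj h0.le (by linarith)
      (by rw [← ContinuousLinearMap.mul_apply, h, ContinuousLinearMap.mul_apply])
  -- a sequence of such points accumulating at `0`
  set u : ℕ → ℂ := fun k => -(((1 / ((k:ℝ) + 3)) : ℝ) : ℂ) with hu
  have hpos' : ∀ k : ℕ, 0 < 1 / ((k:ℝ) + 3) := fun k => by positivity
  have hlt' : ∀ k : ℕ, 1 / ((k:ℝ) + 3) < 1/2 := by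
    intro k
    rw [div_lt_div_iff₀ (by positivity) (by norm_num)]
    have : (0:ℝ) ≤ (k:ℝ) := Nat.cast_nonneg k
    linarith
  have htendsto : Tendsto u atTop (𝓝[≠] (0:ℂ)) := by
    apply tendsto_nhdsWithin_of_tendsto_nhds_of_eventually_within
    · have h1 : Tendsto (fun k : ℕ => ((k:ℝ) + 3)) atTop atTop :=
        tendsto_atTop_add_const_right _ 3 tendsto_natCast_atTop_atTop
      have h2 : Tendsto (fun k : ℕ => ((k:ℝ) + 3)⁻¹) atTop (𝓝 0) := h1.inv_tendsto_atTop
      have h3 : Tendsto (fun k : ℕ => (((((k:ℝ) + 3)⁻¹ : ℝ)) : ℂ)) atTop (𝓝 ((0:ℝ):ℂ)) :=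
        (Complex.continuous_ofReal.tendsto _).comp h2
      have h4 := h3.neg
      simp only [Complex.ofReal_zero, neg_zero] at h4
      convert h4 using 2 with k
      rw [hu]
      simp [one_div]
    · filter_upwards with k
      rw [hu]
      simp only [Set.mem_compl_iff, Set.mem_singleton_iff, neg_eq_zero]
      exact_mod_cast ne_of_gt (hpos' k)
  refine htendsto.frequently (Frequently.of_forall fun k => ?_)
  exact eqneg _ (hpos' k) (hlt' k)

end Aux

/-- For a finite faithful weight `ρ`, the space `A_ρ` of bounded
operators satisfying the Araki condition for `ρ` is complete in the Araki norm: every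
sequence in `A_ρ` that is Cauchy in `‖·‖_A` converges in `‖·‖_A` to some `Y ∈ A_ρ`. -/
theorem statement9 {ι : Type*} (b : HilbertBasis ι ℂ H) (ρ : H →L[ℂ] H)
    (hρ : IsFiniteWeight b ρ)
    (X : ℕ → H →L[ℂ] H) (hX : ∀ n, SatisfiesAraki ρ (X n))
    (hcauchy : ∀ ε : ℝ, 0 < ε → ∃ N : ℕ, ∀ m ≥ N, ∀ n ≥ N,
      arakiNorm ρ (X m - X n) < ε) :
    ∃ Y : H →L[ℂ] H, SatisfiesAraki ρ Y ∧
      Tendsto (fun n => arakiNorm ρ (X n - Y)) atTop (nhds 0) := by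
  classical
  obtain ⟨hpos, hinj, -⟩ := hρ
  have hsa : IsSelfAdjoint ρ := .of_nonneg hpos
  choose F hF using hX
  have hball0 : (0:ℂ) ∈ ball (0:ℂ) (1/2) := mem_ball_self (by norm_num)
  -- Key quantitative comparison for the canonical families
  have key : ∀ m n : ℕ, ∀ ε : ℝ, 0 < ε → arakiNorm ρ (X m - X n) < ε →
      ∀ t ∈ ball (0:ℂ) (1/2), ‖F m t - F n t‖ < ε := by
    intro m n ε hε hlt
    have hsub : IsArakiFamily ρ (X m - X n) (fun t => F m t - F n t) :=
      isArakiFamily_sub (hF m) (hF n)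
    obtain ⟨M₀, hM₀⟩ := hsub.2.1
    have hne : {M : ℝ | 0 ≤ M ∧ ∃ F, IsArakiFamily ρ (X m - X n) F ∧
        ∀ t ∈ ball (0:ℂ) (1/2), ‖F t‖ ≤ M}.Nonempty :=
      ⟨max M₀ 0, le_max_right _ _, fun t => F m t - F n t, hsub,
        fun t ht => (hM₀ t ht).trans (le_max_left _ _)⟩
    have hbdd : BddBelow {M : ℝ | 0 ≤ M ∧ ∃ F, IsArakiFamily ρ (X m - X n) F ∧
        ∀ t ∈ ball (0:ℂ) (1/2), ‖F t‖ ≤ M} := ⟨0, fun M hM => hM.1⟩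
    have hlt' : sInf {M : ℝ | 0 ≤ M ∧ ∃ F, IsArakiFamily ρ (X m - X n) F ∧
        ∀ t ∈ ball (0:ℂ) (1/2), ‖F t‖ ≤ M} < ε := hlt
    obtain ⟨M, hM, hMε⟩ := (csInf_lt_iff hbdd hne).mp hlt'
    obtain ⟨hM0, G, hG, hGb⟩ := hM
    have hEq : Set.EqOn (fun t => F m t - F n t) G (ball (0:ℂ) (1/2)) :=
      arakiFamily_unique hpos hinj hsub hG
    intro t ht
    calc ‖F m t - F n t‖ = ‖G t‖ := by rw [← hEq ht]
      _ ≤ M := hGb t ht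
      _ < ε := hMε
  -- The sequence `X` is Cauchy in the operator norm
  have hXc : CauchySeq X := by
    rw [Metric.cauchySeq_iff]
    intro ε hε
    obtain ⟨N, hN⟩ := hcauchy ε hε
    refine ⟨N, fun m hm n hn => ?_⟩
    rw [dist_eq_norm]
    have h := key m n ε hε (hN m hm n hn) 0 hball0
    rwa [arakiFamily_apply_zero hsa (hF m), arakiFamily_apply_zero hsa (hF n)] at h
  obtain ⟨Y, hY⟩ := cauchySeq_tendsto_of_complete hXc
  -- the pointwise limit of the families
  have hptC : ∀ t ∈ ball (0:ℂ) (1/2), ∃ L, Tendsto (fun n => F n t) atTop (nhds L) := by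
    intro t ht
    refine cauchySeq_tendsto_of_complete ?_
    rw [Metric.cauchySeq_iff]
    intro ε hε
    obtain ⟨N, hN⟩ := hcauchy ε hε
    exact ⟨N, fun m hm n hn => by
      rw [dist_eq_norm]; exact key m n ε hε (hN m hm n hn) t ht⟩
  haveI : Nonempty (H →L[ℂ] H) := ⟨0⟩
  set G : ℂ → (H →L[ℂ] H) := fun t => limUnder atTop (fun n => F n t) with hGdef
  have hGt : ∀ t ∈ ball (0:ℂ) (1/2), Tendsto (fun n => F n t) atTop (nhds (G t)) := by
    intro t ht
    obtain ⟨L, hL⟩ := hptC t ht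
    rw [hGdef]
    simp only
    rw [hL.limUnder_eq]
    exact hL
  -- uniform Cauchy, hence uniform convergence on the ball
  have hUC : UniformCauchySeqOn (fun n t => F n t) atTop (ball (0:ℂ) (1/2)) := by
    rw [Metric.uniformCauchySeqOn_iff]
    intro ε hε
    obtain ⟨N, hN⟩ := hcauchy ε hε
    exact ⟨N, fun m hm n hn t ht => by
      rw [dist_eq_norm]; exact key m n ε hε (hN m hm n hn) t ht⟩
  have hTU : TendstoUniformlyOn (fun n t => F n t) G atTop (ball (0:ℂ) (1/2)) :=
    hUC.tendstoUniformlyOn_of_tendsto hGt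
  have hGd : DifferentiableOn ℂ G (ball (0:ℂ) (1/2)) :=
    hTU.tendstoLocallyUniformlyOn.differentiableOn
      (Eventually.of_forall fun n => (hF n).1) isOpen_ball
  -- quantitative closeness to the limit family
  have hclose : ∀ ε : ℝ, 0 < ε → ∃ N, ∀ n ≥ N, ∀ t ∈ ball (0:ℂ) (1/2),
      ‖F n t - G t‖ ≤ ε := by
    intro ε hε
    obtain ⟨N, hN⟩ := hcauchy ε hε
    refine ⟨N, fun n hn t ht => ?_⟩
    have htd : Tendsto (fun m => ‖F n t - F m t‖) atTop (nhds ‖F n t - G t‖) :=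
      (Filter.Tendsto.const_sub (F n t) (hGt t ht)).norm
    exact le_of_tendsto htd (eventually_atTop.mpr
      ⟨N, fun m hm => (key n m ε hε (hN n hn m hm) t ht).le⟩)
  -- boundedness of `G`
  obtain ⟨N₁, hN₁⟩ := hclose 1 one_pos
  obtain ⟨MN, hMN⟩ := (hF N₁).2.1
  have hGb : ∀ t ∈ ball (0:ℂ) (1/2), ‖G t‖ ≤ MN + 1 := by
    intro t ht
    calc ‖G t‖ = ‖F N₁ t - (F N₁ t - G t)‖ := by rw [sub_sub_cancel]
      _ ≤ ‖F N₁ t‖ + ‖F N₁ t - G t‖ := norm_sub_le _ _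
      _ ≤ MN + 1 := add_le_add (hMN t ht) (hN₁ N₁ le_rfl t ht)
  -- the relations pass to the limit
  have hmemR : ∀ t : ℝ, 0 ≤ t → t < 1/2 → (t:ℂ) ∈ ball (0:ℂ) (1/2) := by
    intro t h0 h1
    rw [mem_ball, dist_zero_right, Complex.norm_real, Real.norm_eq_abs, abs_of_nonneg h0]
    exact h1
  have hmemR' : ∀ t : ℝ, 0 ≤ t → t < 1/2 → -(t:ℂ) ∈ ball (0:ℂ) (1/2) := by
    intro t h0 h1
    rw [mem_ball, dist_zero_right, norm_neg, Complex.norm_real, Real.norm_eq_abs, abs_of_nonneg h0]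
    exact h1
  have hGrel1 : ∀ t : ℝ, 0 ≤ t → t < 1/2 → G (t:ℂ) * opow ρ t = opow ρ t * Y := by
    intro t h0 h1
    have l1 : Tendsto (fun n => F n (t:ℂ) * opow ρ t) atTop (nhds (G (t:ℂ) * opow ρ t)) :=
      (hGt _ (hmemR t h0 h1)).mul_const _
    have l2 : Tendsto (fun n => opow ρ t * X n) atTop (nhds (opow ρ t * Y)) :=
      hY.const_mul _
    have heqs : (fun n => F n (t:ℂ) * opow ρ t) = fun n => opow ρ t * X n :=
      funext fun n => (hF n).2.2.1 t h0 h1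
    exact tendsto_nhds_unique (heqs ▸ l1) l2
  have hGrel2 : ∀ t : ℝ, 0 ≤ t → t < 1/2 → opow ρ t * G (-(t:ℂ)) = Y * opow ρ t := by
    intro t h0 h1
    have l1 : Tendsto (fun n => opow ρ t * F n (-(t:ℂ))) atTop
        (nhds (opow ρ t * G (-(t:ℂ)))) := (hGt _ (hmemR' t h0 h1)).const_mul _
    have l2 : Tendsto (fun n => X n * opow ρ t) atTop (nhds (Y * opow ρ t)) :=
      hY.mul_const _
    have heqs : (fun n => opow ρ t * F n (-(t:ℂ))) = fun n => X n * opow ρ t :=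
      funext fun n => (hF n).2.2.2 t h0 h1
    exact tendsto_nhds_unique (heqs ▸ l1) l2
  have hGfam : IsArakiFamily ρ Y G := ⟨hGd, ⟨MN + 1, hGb⟩, hGrel1, hGrel2⟩
  refine ⟨Y, ⟨G, hGfam⟩, ?_⟩
  -- convergence in the Araki norm
  rw [Metric.tendsto_atTop]
  intro ε hε
  obtain ⟨N, hN⟩ := hclose (ε/2) (by positivity)
  refine ⟨N, fun n hn => ?_⟩
  have hsub : IsArakiFamily ρ (X n - Y) (fun t => F n t - G t) :=
    isArakiFamily_sub (hF n) hGfam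
  have hmem : (ε/2) ∈ {M : ℝ | 0 ≤ M ∧ ∃ F, IsArakiFamily ρ (X n - Y) F ∧
      ∀ t ∈ ball (0:ℂ) (1/2), ‖F t‖ ≤ M} :=
    ⟨by positivity, fun t => F n t - G t, hsub, fun t ht => hN n hn t ht⟩
  have hbdd : BddBelow {M : ℝ | 0 ≤ M ∧ ∃ F, IsArakiFamily ρ (X n - Y) F ∧
      ∀ t ∈ ball (0:ℂ) (1/2), ‖F t‖ ≤ M} := ⟨0, fun M hM => hM.1⟩
  have hle : arakiNorm ρ (X n - Y) ≤ ε/2 := csInf_le hbdd hmem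
  have hge : 0 ≤ arakiNorm ρ (X n - Y) := le_csInf ⟨ε/2, hmem⟩ fun M hM => hM.1
  rw [Real.dist_eq, sub_zero, abs_of_nonneg hge]
  linarith
end
end
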